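/- Let b be a standard Brownian bridge on [0,1] from 0 to 0. Then the processes Ab(t) = (b(t)-b(1-t))/2 and Sb(t) = (b(t)+b(1-t))/2, both restricted to t ∈ [0,1/2], are stochastically independent; moreover (Ab(t))_{t∈[0,1/2]} has the same law as (b(2t)/2)_{t∈[0,1/2]}, and (Sb(t))_{t∈[0,1/2]} has the same law as (W(2t)/2)_{t∈[0,1/2]} where W is a standard Brownian motion. -/

import Mathlib

open MeasureTheory ProbabilityTheory Set
noncomputable section

/-- `X` is a centered Gaussian process indexed by `D ⊆ ι` with covariance kernel `K`:
every finite linear combination of coordinates in `D` is a centered Gaussian random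
variable with the variance prescribed by `K`. -/
def IsCenteredGaussian {Ω ι : Type*} [MeasurableSpace Ω] (P : Measure Ω)
    (X : Ω → ι → ℝ) (D : Set ι) (K : ι → ι → ℝ) : Prop :=
  (∀ t, Measurable fun ω => X ω t) ∧
  ∀ (n : ℕ) (c : Fin n → ℝ) (t : Fin n → ι), (∀ i, t i ∈ D) →
    Measure.map (fun ω => ∑ i, c i * X ω (t i)) P =
      gaussianReal 0 (∑ i, ∑ j, c i * c j * K (t i) (t j)).toNNReal

/-- Standard Brownian motion on `[0,1]`. -/
def IsBrownianMotion {Ω : Type*} [MeasurableSpace Ω] (P : Measure Ω)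
    (W : Ω → ℝ → ℝ) : Prop :=
  IsCenteredGaussian P W (Icc 0 1) fun s t => min s t

/-- Standard Brownian bridge on `[0,1]` from `0` to `0`. -/
def IsBrownianBridge {Ω : Type*} [MeasurableSpace Ω] (P : Measure Ω)
    (b : Ω → ℝ → ℝ) : Prop :=
  IsCenteredGaussian P b (Icc 0 1) fun s t => min s t - s * t

/-- Standard Brownian sheet on `[0,1]²`. -/
def IsBrownianSheet {Ω : Type*} [MeasurableSpace Ω] (P : Measure Ω)
    (W : Ω → ℝ × ℝ → ℝ) : Prop :=
  IsCenteredGaussian P W (Icc 0 1 ×ˢ Icc 0 1)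
    fun t s => min t.1 s.1 * min t.2 s.2

/-!
Everything in sight is a centered Gaussian process, so it suffices to compare covariances.
For `s, t ∈ [0, 1/2]` the bridge covariance `k(s,t) = s ∧ t - st` satisfies
`k(1-s, 1-t) = k(s,t)` and `k(s, 1-t) = k(1-s, t) = st`. Hence `Cov(Ab s, Ab t) = k(2s, 2t)/4`,
`Cov(Sb s, Sb t) = (2s ∧ 2t)/4` and `Cov(Ab s, Sb t) = 0`: these are the covariances of
`b(2·)/2` and `W(2·)/2`, and the two parts are uncorrelated. A centered Gaussian process has its
law determined by its covariance (finite-dimensional laws, then Cramér–Wold), and jointly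
Gaussian uncorrelated processes are independent.
-/

lemma ContinuousLinearMap.apply_eq_sum_mul_single {κ : Type*} [Fintype κ] [DecidableEq κ]
    (L : (κ → ℝ) →L[ℝ] ℝ) (x : κ → ℝ) : L x = ∑ i, L (Pi.single i 1) * x i := by
  rw [← ContinuousLinearMap.coe_coe, LinearMap.pi_apply_eq_sum_univ]
  refine Finset.sum_congr rfl fun i _ => ?_
  rw [smul_eq_mul, mul_comm]
  congr 2
  ext j
  simp [Pi.single_apply, eq_comm]

lemma MeasureTheory.Measure.ext_of_forall_map_sum_mul {κ : Type*} [Fintype κ]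
    {μ ν : Measure (κ → ℝ)} [IsFiniteMeasure μ] [IsFiniteMeasure ν]
    (h : ∀ c : κ → ℝ, μ.map (fun x => ∑ i, c i * x i) = ν.map (fun x => ∑ i, c i * x i)) :
    μ = ν := by
  classical
  refine Measure.ext_of_charFunDual (funext fun L => ?_)
  have hL : ⇑L = fun x => ∑ i, L (Pi.single i 1) * x i := funext (L.apply_eq_sum_mul_single)
  rw [charFunDual_eq_charFun_map_one, charFunDual_eq_charFun_map_one, hL, h]

lemma ProbabilityTheory.covariance_eq_zero_of_map_add_eq_map_sub {Ω : Type*} [MeasurableSpace Ω]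
    {μ : Measure Ω} [IsFiniteMeasure μ] {X Y : Ω → ℝ} (hX : MemLp X 2 μ) (hY : MemLp Y 2 μ)
    (h : μ.map (X + Y) = μ.map (X - Y)) : cov[X, Y; μ] = 0 := by
  have hvar := congrArg (fun ν => Var[id; ν]) h
  simp only [variance_id_map (hX.aemeasurable.add hY.aemeasurable),
    variance_id_map (hX.aemeasurable.sub hY.aemeasurable), variance_add hX hY,
    variance_sub hX hY] at hvar
  linarith

namespace IsCenteredGaussian

variable {Ω ι : Type*} [MeasurableSpace Ω] {P : Measure Ω} {X : Ω → ι → ℝ} {D : Set ι}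
  {K : ι → ι → ℝ}

lemma map_sum {κ : Type*} [Fintype κ] (h : IsCenteredGaussian P X D K) (c : κ → ℝ) (t : κ → ι)
    (ht : ∀ k, t k ∈ D) :
    P.map (fun ω => ∑ k, c k * X ω (t k)) =
      gaussianReal 0 (∑ k, ∑ l, c k * c l * K (t k) (t l)).toNNReal := by
  let e := (Fintype.equivFin κ).symm
  have hsum : (fun ω => ∑ k, c k * X ω (t k)) = fun ω => ∑ i, (c ∘ e) i * X ω ((t ∘ e) i) :=
    funext fun ω => (Fintype.sum_equiv e _ _ fun _ => rfl).symm
  have hvar : ∑ k, ∑ l, c k * c l * K (t k) (t l) =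
      ∑ i, ∑ j, (c ∘ e) i * (c ∘ e) j * K ((t ∘ e) i) ((t ∘ e) j) :=
    (Fintype.sum_equiv e _ _ fun i =>
      Fintype.sum_equiv e _ (fun l => c (e i) * c l * K (t (e i)) (t l)) fun _ => rfl).symm
  rw [hsum, hvar]
  exact h.2 _ _ _ fun i => ht (e i)

lemma isProbabilityMeasure (h : IsCenteredGaussian P X D K) : IsProbabilityMeasure P := by
  have h0 := congrArg (· univ) (h.2 0 ![] ![] finZeroElim)
  simp only [Finset.univ_eq_empty, Finset.sum_empty, Real.toNNReal_zero, gaussianReal_zero_var,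
    Measure.map_apply measurable_const MeasurableSet.univ, preimage_univ, measure_univ] at h0
  exact ⟨h0⟩

lemma comp_right {ι' : Type*} {D' : Set ι'} (h : IsCenteredGaussian P X D K) (f : ι' → ι)
    (hf : MapsTo f D' D) :
    IsCenteredGaussian P (fun ω => X ω ∘ f) D' fun s t => K (f s) (f t) :=
  ⟨fun t => h.1 (f t), fun _ c t ht => h.2 _ c (f ∘ t) fun i => hf (ht i)⟩

lemma of_linear {ι' J : Type*} [Fintype J] (h : IsCenteredGaussian P X D K)
    {Y : Ω → ι' → ℝ} {K' : ι' → ι' → ℝ} (a : J → ι' → ℝ) (u : J → ι' → ι)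
    (hu : ∀ j s, u j s ∈ D) (hY : ∀ ω s, Y ω s = ∑ j, a j s * X ω (u j s))
    (hK' : ∀ s s', K' s s' = ∑ j, ∑ j', a j s * a j' s' * K (u j s) (u j' s')) :
    IsCenteredGaussian P Y univ K' := by
  refine ⟨fun s => ?_, fun n c t _ => ?_⟩
  · simp_rw [hY]
    exact Finset.measurable_sum _ fun j _ => (h.1 _).const_mul _
  · convert h.map_sum (fun p : Fin n × J => c p.1 * a p.2 (t p.1)) (fun p => u p.2 (t p.1))
      (fun p => hu _ _) using 3
    · simp_rw [hY, Fintype.sum_prod_type, Finset.mul_sum, mul_assoc]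
    · simp_rw [hK', Fintype.sum_prod_type, Finset.mul_sum]
      rw [Finset.sum_congr rfl fun i _ => Finset.sum_comm]
      refine Finset.sum_congr rfl fun i _ => Finset.sum_congr rfl fun j _ =>
        Finset.sum_congr rfl fun i' _ => Finset.sum_congr rfl fun j' _ => by ring

lemma isGaussianProcess (h : IsCenteredGaussian P X univ K) :
    IsGaussianProcess (fun t ω => X ω t) P := by
  classical
  refine ⟨fun I => ⟨isGaussian_of_map_eq_gaussianReal fun L => ?_⟩⟩
  have hI : Measurable fun ω => I.restrict (X ω) := measurable_pi_lambda _ fun i => h.1 i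
  have hL : (L ∘ fun ω => I.restrict (X ω)) = fun ω => ∑ i : I, L (Pi.single i 1) * X ω i :=
    funext fun ω => L.apply_eq_sum_mul_single _
  have := h.map_sum (fun i : I => L (Pi.single i 1)) (↑) fun _ => mem_univ _
  rw [← hL, ← Measure.map_map L.continuous.measurable hI] at this
  exact ⟨0, _, this⟩

lemma map_add_eq_map_sub (h : IsCenteredGaussian P X D K) {s t : ι} (hs : s ∈ D) (ht : t ∈ D)
    (hst : K s t + K t s = 0) :
    P.map (fun ω => X ω s + X ω t) = P.map (fun ω => X ω s - X ω t) := by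
  have hadd := h.map_sum ![1, 1] ![s, t] (Fin.forall_fin_two.2 ⟨hs, ht⟩)
  have hsub := h.map_sum ![1, -1] ![s, t] (Fin.forall_fin_two.2 ⟨hs, ht⟩)
  simp only [Fin.sum_univ_two, Matrix.cons_val_zero, Matrix.cons_val_one, one_mul, neg_one_mul,
    ← sub_eq_add_neg] at hadd hsub
  rw [hadd, hsub]
  congr 2
  linear_combination 2 * hst

lemma map_eq {Ω' : Type*} [MeasurableSpace Ω'] {Q : Measure Ω'} {Y : Ω' → ι → ℝ}
    (hX : IsCenteredGaussian P X univ K) (hY : IsCenteredGaussian Q Y univ K) :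
    P.map X = Q.map Y := by
  have := hX.isProbabilityMeasure
  have := hY.isProbabilityMeasure
  refine IsProjectiveLimit.unique (P := fun I => (P.map X).map I.restrict) (fun _ => rfl)
    fun I => Measure.ext_of_forall_map_sum_mul fun c => ?_
  have hXm : Measurable X := measurable_pi_lambda _ hX.1
  have hYm : Measurable Y := measurable_pi_lambda _ hY.1
  have hc : Measurable fun x : I → ℝ => ∑ i, c i * x i := by fun_prop
  dsimp only
  rw [Measure.map_map (Finset.measurable_restrict I) hXm,
    Measure.map_map (Finset.measurable_restrict I) hYm,
    Measure.map_map hc ((Finset.measurable_restrict I).comp hXm),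
    Measure.map_map hc ((Finset.measurable_restrict I).comp hYm)]
  exact (hY.map_sum c (↑) fun _ => mem_univ _).trans (hX.map_sum c (↑) fun _ => mem_univ _).symm

lemma indepFun_of_kernel_inl_inr {S T : Type*} {X : Ω → S → ℝ} {Y : Ω → T → ℝ}
    {K : S ⊕ T → S ⊕ T → ℝ} (h : IsCenteredGaussian P (fun ω => Sum.elim (X ω) (Y ω)) univ K)
    (hK : ∀ s t, K (.inl s) (.inr t) + K (.inr t) (.inl s) = 0) : IndepFun X Y P := by
  have := h.isProbabilityMeasure
  have hG := h.isGaussianProcess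
  have hXY : (fun p ω => Sum.elim (X ω) (Y ω) p) =
      Sum.elim (fun s ω => X ω s) (fun t ω => Y ω t) := by
    ext (p | p) ω <;> rfl
  rw [hXY] at hG
  exact hG.indepFun_of_covariance_eq_zero (fun s => (h.1 (.inl s)).aemeasurable)
    (fun t => (h.1 (.inr t)).aemeasurable) fun s t =>
      covariance_eq_zero_of_map_add_eq_map_sub (hG.hasGaussianLaw_eval (.inl s)).memLp_two
        (hG.hasGaussianLaw_eval (.inr t)).memLp_two
        (h.map_add_eq_map_sub (mem_univ _) (mem_univ _) (hK s t))

end IsCenteredGaussian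

lemma IsCenteredGaussian.comp_two_mul_div_two {Ω : Type*} [MeasurableSpace Ω] {P : Measure Ω}
    {X : Ω → ℝ → ℝ} {K : ℝ → ℝ → ℝ} (h : IsCenteredGaussian P X (Icc 0 1) K) :
    IsCenteredGaussian P (fun ω (t : Icc (0:ℝ) (1/2)) => X ω (2 * t) / 2) univ
      fun s t => K (2 * s) (2 * t) / 4 :=
  h.of_linear (fun (_ : Unit) _ => 1 / 2) (fun _ t => 2 * t)
    (fun _ t => ⟨by linarith [t.2.1], by linarith [t.2.2]⟩) (fun _ _ => by simp [div_eq_inv_mul])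
    fun _ _ => by rw [Fintype.sum_unique, Fintype.sum_unique]; ring

lemma bridge_kernel_one_sub_one_sub (s t : ℝ) :
    min (1 - s) (1 - t) - (1 - s) * (1 - t) = min s t - s * t := by
  rcases le_total s t with h | h
  · rw [min_eq_right (by linarith : 1 - t ≤ 1 - s), min_eq_left h]; ring
  · rw [min_eq_left (by linarith : 1 - s ≤ 1 - t), min_eq_right h]; ring

lemma bridge_kernel_one_sub_right {s t : ℝ} (h : s + t ≤ 1) :
    min s (1 - t) - s * (1 - t) = s * t := by
  rw [min_eq_left (by linarith)]; ring

lemma bridge_kernel_one_sub_left {s t : ℝ} (h : s + t ≤ 1) :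
    min (1 - s) t - (1 - s) * t = s * t := by
  rw [min_eq_right (by linarith)]; ring

/-- The covariance of the pair `(b(2·)/2, W(2·)/2)` on `[0,1/2]` when `b` and `W` are
independent. -/
def foldedBridgeCov : Icc (0:ℝ) (1/2) ⊕ Icc (0:ℝ) (1/2) → Icc (0:ℝ) (1/2) ⊕ Icc (0:ℝ) (1/2) → ℝ
  | .inl s, .inl t => (min (2 * (s:ℝ)) (2 * t) - 2 * s * (2 * t)) / 4
  | .inr s, .inr t => min (2 * (s:ℝ)) (2 * t) / 4
  | _, _ => 0

lemma IsBrownianBridge.isCenteredGaussian_antisymm_symm {Ω : Type*} [MeasurableSpace Ω]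
    {P : Measure Ω} {b : Ω → ℝ → ℝ} (hb : IsBrownianBridge P b) :
    IsCenteredGaussian P (fun ω => Sum.elim
      (fun t : Icc (0:ℝ) (1/2) => (b ω t - b ω (1 - t)) / 2)
      (fun t : Icc (0:ℝ) (1/2) => (b ω t + b ω (1 - t)) / 2)) univ foldedBridgeCov := by
  refine hb.of_linear ![fun _ => 1 / 2, Sum.elim (fun _ => -1 / 2) fun _ => 1 / 2]
    ![fun p => p.elim (↑) (↑), fun p => 1 - p.elim (↑) (↑)] ?_ ?_ ?_
  · intro j p
    have hp : p.elim (↑) (↑) ∈ Icc (0:ℝ) (1/2) := by cases p <;> exact Subtype.prop _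
    fin_cases j
    · show p.elim (↑) (↑) ∈ Icc (0:ℝ) 1
      exact ⟨hp.1, by linarith [hp.2]⟩
    · show 1 - p.elim (↑) (↑) ∈ Icc (0:ℝ) 1
      exact ⟨by linarith [hp.2], by linarith [hp.1]⟩
  · rintro ω (t | t) <;>
      simp only [Fin.sum_univ_two, Matrix.cons_val_zero, Matrix.cons_val_one, Sum.elim_inl,
        Sum.elim_inr] <;> ring
  · rintro (s | s) (t | t)
    all_goals
      obtain ⟨-, hs⟩ := s.2
      obtain ⟨-, ht⟩ := t.2
      simp only [foldedBridgeCov, Fin.sum_univ_two, Matrix.cons_val_zero, Matrix.cons_val_one,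
        Sum.elim_inl, Sum.elim_inr, bridge_kernel_one_sub_one_sub,
        bridge_kernel_one_sub_right (by linarith : (s:ℝ) + t ≤ 1),
        bridge_kernel_one_sub_left (by linarith : (s:ℝ) + t ≤ 1),
        ← mul_min_of_nonneg _ _ (zero_le_two : (0:ℝ) ≤ 2)]
      ring

theorem bridge_sym_anti_parts_general {Ω : Type*} [MeasurableSpace Ω] (P : Measure Ω)
    (b W : Ω → ℝ → ℝ)
    (hb : IsBrownianBridge P b) (hW : IsBrownianMotion P W) :
    IndepFun (fun ω => fun t : Icc (0:ℝ) (1/2) => (b ω t - b ω (1 - t)) / 2)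
        (fun ω => fun t : Icc (0:ℝ) (1/2) => (b ω t + b ω (1 - t)) / 2) P ∧
    Measure.map (fun ω => fun t : Icc (0:ℝ) (1/2) => (b ω t - b ω (1 - t)) / 2) P =
      Measure.map (fun ω => fun t : Icc (0:ℝ) (1/2) => b ω (2 * t) / 2) P ∧
    Measure.map (fun ω => fun t : Icc (0:ℝ) (1/2) => (b ω t + b ω (1 - t)) / 2) P =
      Measure.map (fun ω => fun t : Icc (0:ℝ) (1/2) => W ω (2 * t) / 2) P := by
  have h := hb.isCenteredGaussian_antisymm_symm
  exact ⟨h.indepFun_of_kernel_inl_inr fun _ _ => add_zero 0,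
    (h.comp_right Sum.inl (mapsTo_univ _ _)).map_eq hb.comp_two_mul_div_two,
    (h.comp_right Sum.inr (mapsTo_univ _ _)).map_eq hW.comp_two_mul_div_two⟩

/-- The antisymmetric and symmetric parts of a Brownian bridge around `t = 1/2`,
restricted to `[0,1/2]`, are independent; `Ab ∼ (b(2t)/2)` and `Sb ∼ (W(2t)/2)`
for a standard Brownian motion `W`. -/
theorem bridge_sym_anti_parts {Ω : Type*} [MeasurableSpace Ω] (P : Measure Ω)
    [IsProbabilityMeasure P] (b W : Ω → ℝ → ℝ)
    (hb : IsBrownianBridge P b) (hW : IsBrownianMotion P W)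
    (hbc : ∀ ω, Continuous (b ω)) :
    IndepFun (fun ω => fun t : Icc (0:ℝ) (1/2) => (b ω t - b ω (1 - t)) / 2)
        (fun ω => fun t : Icc (0:ℝ) (1/2) => (b ω t + b ω (1 - t)) / 2) P ∧
    Measure.map (fun ω => fun t : Icc (0:ℝ) (1/2) => (b ω t - b ω (1 - t)) / 2) P =
      Measure.map (fun ω => fun t : Icc (0:ℝ) (1/2) => b ω (2 * t) / 2) P ∧
    Measure.map (fun ω => fun t : Icc (0:ℝ) (1/2) => (b ω t + b ω (1 - t)) / 2) P =
      Measure.map (fun ω => fun t : Icc (0:ℝ) (1/2) => W ω (2 * t) / 2) P :=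
  bridge_sym_anti_parts_general P b W hb hW
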